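/- For α, β > 0, the partial antiderivative of the squared breather at a fixed time satisfies: (1/2)∫_{−∞}^x B(0,s)² ds = 2β[α² + β² + αβ sin(2αx) − β² cos(2αx) + α²(sinh(2βx)+cosh(2βx))] / [α² + β² + α² cosh(2βx) − β² cos(2αx)], where B(0,x) = 2√2 ∂_x[arctan((β/α) sin(αx)/cosh(βx))]. -/

import Mathlib

/-!
Write `B = 2√2 ∂ₓ arctan (g / f)` with `f = α cosh (β x)`, `g = β sin (α x)`, and let
`τ = 2 (f² + g²) = α² + β² + α² cosh (2 β x) - β² cos (2 α x)`. Then `B = 4√2 W / τ` with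
`W = g' f - g f'`, and the identity `τ'' τ - τ'² = 16 W²` turns this into `B² / 2 = (τ' / τ)'`.
As `x → -∞`, `τ' / τ → -2β`, so `2β + τ' / τ` is the primitive of `B² / 2` vanishing at `-∞`;
written out, it is the right-hand side. Integrability on `(-∞, x]` comes for free, the integrand
being a nonnegative derivative of a function with a limit at `-∞`.
-/
noncomputable def breather0 (α β x : ℝ) : ℝ :=
  2 * Real.sqrt 2 *
    deriv (fun x' : ℝ =>
      Real.arctan ((β / α) * Real.sin (α * x') / Real.cosh (β * x'))) x

open Real Set MeasureTheory Filter Topology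

theorem MeasureTheory.integrableOn_Iic_deriv_of_nonneg' {g g' : ℝ → ℝ} {a l : ℝ}
    (hderiv : ∀ x ∈ Iic a, HasDerivAt g (g' x) x) (g'pos : ∀ x ∈ Iio a, 0 ≤ g' x)
    (hg : Tendsto g atBot (𝓝 l)) : IntegrableOn g' (Iic a) := by
  have hmirror : IntegrableOn (fun y => g' (-y)) (Ioi (-a)) := by
    refine integrableOn_Ioi_deriv_of_nonneg' (g := fun y => -g (-y)) (l := -l)
      (fun y hy => ?_) (fun y hy => g'pos _ (neg_lt.mp (mem_Ioi.mp hy)))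
      (hg.comp tendsto_neg_atTop_atBot).neg
    exact ((hderiv (-y) (neg_le.mp (mem_Ici.mp hy))).comp y (hasDerivAt_neg y)).neg.congr_deriv
      (by ring)
  rw [integrableOn_Iic_iff_integrableOn_Iio]
  simpa using hmirror.comp_neg

section Breather

variable {α β : ℝ}

noncomputable def breatherTau (α β x : ℝ) : ℝ :=
  α ^ 2 + β ^ 2 + α ^ 2 * cosh (2 * β * x) - β ^ 2 * cos (2 * α * x)

noncomputable def breatherTauDeriv (α β x : ℝ) : ℝ :=
  2 * α ^ 2 * β * sinh (2 * β * x) + 2 * α * β ^ 2 * sin (2 * α * x)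

noncomputable def breatherMass (α β x : ℝ) : ℝ :=
  2 * β + breatherTauDeriv α β x / breatherTau α β x

theorem breatherTau_eq (α β x : ℝ) :
    breatherTau α β x = 2 * (α ^ 2 * cosh (β * x) ^ 2 + β ^ 2 * sin (α * x) ^ 2) := by
  rw [breatherTau, mul_assoc 2 β, mul_assoc 2 α, cosh_two_mul, cos_two_mul, cosh_sq, sin_sq]
  ring

theorem breatherTau_pos (hα : α ≠ 0) (x : ℝ) : 0 < breatherTau α β x := by
  rw [breatherTau_eq]
  have := cosh_pos (β * x)
  positivity

theorem hasDerivAt_breatherTau (α β x : ℝ) :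
    HasDerivAt (breatherTau α β) (breatherTauDeriv α β x) x := by
  have hcosh := ((hasDerivAt_id' x).const_mul (2 * β)).cosh
  have hcos := ((hasDerivAt_id' x).const_mul (2 * α)).cos
  exact (((hcosh.const_mul (α ^ 2)).const_add (α ^ 2 + β ^ 2)).sub
    (hcos.const_mul (β ^ 2))).congr_deriv (by rw [breatherTauDeriv]; ring)

theorem hasDerivAt_breatherTauDeriv (α β x : ℝ) :
    HasDerivAt (breatherTauDeriv α β)
      (4 * α ^ 2 * β ^ 2 * (cosh (2 * β * x) + cos (2 * α * x))) x := by
  have hsinh := ((hasDerivAt_id' x).const_mul (2 * β)).sinh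
  have hsin := ((hasDerivAt_id' x).const_mul (2 * α)).sin
  exact ((hsinh.const_mul (2 * α ^ 2 * β)).add (hsin.const_mul (2 * α * β ^ 2))).congr_deriv
    (by ring)

theorem breather0_eq (hα : α ≠ 0) (x : ℝ) :
    breather0 α β x = 4 * √2 * α * β *
      (α * cos (α * x) * cosh (β * x) - β * sin (α * x) * sinh (β * x)) / breatherTau α β x := by
  have hch := (cosh_pos (β * x)).ne'
  have hphase : HasDerivAt (fun t => arctan (β / α * sin (α * t) / cosh (β * t))) _ x :=
    ((((hasDerivAt_id' x).const_mul α).sin.const_mul (β / α)).div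
      ((hasDerivAt_id' x).const_mul β).cosh hch).arctan
  have hτ := breatherTau_pos (β := β) hα x
  rw [breatherTau_eq] at hτ
  rw [breather0, hphase.deriv, breatherTau_eq, Pi.div_apply]
  field_simp
  ring

theorem breatherTau_mul_sub_sq (α β x : ℝ) :
    4 * α ^ 2 * β ^ 2 * (cosh (2 * β * x) + cos (2 * α * x)) * breatherTau α β x
        - breatherTauDeriv α β x ^ 2 =
      16 * α ^ 2 * β ^ 2 *
        (α * cos (α * x) * cosh (β * x) - β * sin (α * x) * sinh (β * x)) ^ 2 := by
  rw [breatherTau_eq, breatherTauDeriv, mul_assoc 2 β, mul_assoc 2 α, cosh_two_mul, cos_two_mul,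
    sinh_two_mul, sin_two_mul]
  linear_combination 8 * α ^ 2 * β ^ 2 * (α ^ 2 * cosh (β * x) ^ 2 + β ^ 2 * sin (α * x) ^ 2)
    * cosh_sq_sub_sinh_sq (β * x)

theorem hasDerivAt_breatherMass (hα : α ≠ 0) (x : ℝ) :
    HasDerivAt (breatherMass α β) (breather0 α β x ^ 2 / 2) x := by
  have hτ := (breatherTau_pos (β := β) hα x).ne'
  refine (((hasDerivAt_breatherTauDeriv α β x).div (hasDerivAt_breatherTau α β x) hτ).const_add
    (2 * β)).congr_deriv ?_
  rw [breather0_eq hα, ← sub_eq_zero]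
  field_simp
  rw [sq_sqrt zero_le_two]
  linear_combination (norm := ring_nf) 2 * breatherTau_mul_sub_sq α β x

theorem breatherMass_eq (hα : α ≠ 0) (x : ℝ) :
    breatherMass α β x =
      2 * β * (α ^ 2 + β ^ 2 + α * β * sin (2 * α * x) - β ^ 2 * cos (2 * α * x)
          + α ^ 2 * (sinh (2 * β * x) + cosh (2 * β * x))) / breatherTau α β x := by
  have hτ := (breatherTau_pos (β := β) hα x).ne'
  rw [breatherMass, breatherTauDeriv]
  field_simp
  rw [breatherTau]
  ring

theorem exp_neg_div_two_le_breatherTau (α β x : ℝ) :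
    α ^ 2 * exp (-(2 * β * x)) / 2 ≤ breatherTau α β x := by
  have hcos : β ^ 2 * cos (2 * α * x) ≤ β ^ 2 := mul_le_of_le_one_right (sq_nonneg β) (cos_le_one _)
  have hcosh : exp (-(2 * β * x)) / 2 ≤ cosh (2 * β * x) := by
    rw [cosh_eq]
    linarith [exp_pos (2 * β * x)]
  rw [breatherTau]
  nlinarith [mul_le_mul_of_nonneg_left hcosh (sq_nonneg α)]

theorem tendsto_breatherTau_atBot (hα : α ≠ 0) (hβ : 0 < β) :
    Tendsto (breatherTau α β) atBot atTop := by
  refine tendsto_atTop_mono (exp_neg_div_two_le_breatherTau α β) ?_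
  refine Tendsto.atTop_div_const two_pos (Tendsto.const_mul_atTop (by positivity) ?_)
  exact tendsto_exp_atTop.comp
    (tendsto_neg_atBot_atTop.comp (tendsto_id.const_mul_atBot (by positivity)))

theorem tendsto_breatherMass_atBot (hα : α ≠ 0) (hβ : 0 < β) :
    Tendsto (breatherMass α β) atBot (𝓝 0) := by
  have hbdd : IsBoundedUnder (· ≤ ·) atBot (norm ∘ fun x => 2 * β * (α ^ 2 + β ^ 2
      + α * β * sin (2 * α * x) - β ^ 2 * cos (2 * α * x)
      + α ^ 2 * (sinh (2 * β * x) + cosh (2 * β * x)))) := by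
    refine isBoundedUnder_of_eventually_le (a := 2 * β * (2 * α ^ 2 + 2 * β ^ 2 + |α * β|)) ?_
    filter_upwards [eventually_le_atBot 0] with x hx
    have hsin : |α * β * sin (2 * α * x)| ≤ |α * β| := by
      rw [abs_mul]
      exact mul_le_of_le_one_right (abs_nonneg _) (abs_sin_le_one _)
    have hcos : |β ^ 2 * cos (2 * α * x)| ≤ β ^ 2 := by
      rw [abs_mul, abs_sq]
      exact mul_le_of_le_one_right (sq_nonneg β) (abs_cos_le_one _)
    have hexp : exp (2 * β * x) ≤ 1 := exp_le_one_iff.mpr (by nlinarith)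
    have hexp' : |α ^ 2 * exp (2 * β * x)| ≤ α ^ 2 := by
      rw [abs_mul, abs_sq, abs_of_pos (exp_pos _)]
      exact mul_le_of_le_one_right (sq_nonneg α) hexp
    rw [Function.comp_apply, norm_mul, sinh_add_cosh, Real.norm_eq_abs, Real.norm_eq_abs,
      abs_of_pos (by positivity : 0 < 2 * β)]
    gcongr
    rw [abs_le] at hsin hcos hexp' ⊢
    constructor <;> linarith [sq_nonneg α, sq_nonneg β]
  refine (isBoundedUnder_le_mul_tendsto_zero hbdd
    (tendsto_breatherTau_atBot hα hβ).inv_tendsto_atTop).congr fun x => ?_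
  rw [breatherMass_eq hα, div_eq_mul_inv, Pi.inv_apply]

end Breather

theorem breather_partial_mass (α β : ℝ) (hα : 0 < α) (hβ : 0 < β) (x : ℝ) :
    (1 / 2) * ∫ s in Set.Iic x, (breather0 α β s) ^ 2 =
      2 * β * (α ^ 2 + β ^ 2 + α * β * Real.sin (2 * α * x)
          - β ^ 2 * Real.cos (2 * α * x)
          + α ^ 2 * (Real.sinh (2 * β * x) + Real.cosh (2 * β * x))) /
        (α ^ 2 + β ^ 2 + α ^ 2 * Real.cosh (2 * β * x)
          - β ^ 2 * Real.cos (2 * α * x)) := by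
  have hderiv : ∀ s ∈ Iic x, HasDerivAt (breatherMass α β) (breather0 α β s ^ 2 / 2) s :=
    fun s _ => hasDerivAt_breatherMass hα.ne' s
  have hlim := tendsto_breatherMass_atBot hα.ne' hβ
  have hint := integrableOn_Iic_deriv_of_nonneg' hderiv (fun s _ => by positivity) hlim
  rw [one_div_mul_eq_div, ← integral_div, integral_Iic_of_hasDerivAt_of_tendsto' hderiv hint hlim,
    sub_zero, breatherMass_eq hα.ne', breatherTau]
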